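/- Let x(·) be a solution of the nonlinear multiagent system, let t ≥ 0, let (i,j) be a pair of indices with |x_i(t) − x_j(t)| = D(x(t)), and let C_φ > 0 be an upper bound for φ on [0, D(x(0))]. Then for every index k and every s ≥ t one has ⟨x_i(t) − x_k(s), x_i(t) − x_j(t)⟩ ≥ ⟨x_i(t) − x_k(t), x_i(t) − x_j(t)⟩ e^{−C_φ (s−t)}, and similarly ⟨x_k(s) − x_j(t), x_i(t) − x_j(t)⟩ ≥ ⟨x_k(t) − x_j(t), x_i(t) − x_j(t)⟩ e^{−C_φ (s−t)}. -/

import Mathlib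

/-!
Projected on a fixed vector `v`, the system becomes the scalar consensus equation
`u̇_k = ∑_m c_km (u_m − u_k)` with weights `c_km = a_km φ(|x_k − x_m|) / N ≥ 0`; the derivative at a
minimizing index is nonnegative, so `min_m u_m` is nondecreasing (the functions are Lipschitz,
hence absolutely continuous, so a.e. derivative information suffices). Taking all directions `v`,
no distance ever exceeds `D(x(0))`, whence `∑_m c_km ≤ C_φ`. For `v = x_i(t) − x_j(t)` maximality
of the pair puts every agent in the half-space `u_m ≥ u_j(t)` at time `t`, hence at all later
times, and there `(u_k − u_j(t)) e^{C_φ (s − t)}` has nonnegative derivative. Exchanging `i` and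
`j` gives the other bound.
-/

open MeasureTheory Finset

noncomputable section

/-- Diameter of a configuration of `N` agents in `ℝ^d`. -/
def mDiam {N d : ℕ} (x : Fin N → EuclideanSpace ℝ (Fin d)) : ℝ :=
  ⨆ i : Fin N, ⨆ j : Fin N, ‖x i - x j‖

/-- Variance of a configuration of `N` agents in `ℝ^d`. -/
def mVar {N d : ℕ} (x : Fin N → EuclideanSpace ℝ (Fin d)) : ℝ :=
  (N : ℝ)⁻¹ * ∑ i : Fin N, ‖x i - (N : ℝ)⁻¹ • ∑ k : Fin N, x k‖ ^ 2

/-- Admissible interaction signals: measurable, valued in `[0,1]` on `[0,∞)`. -/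
def ValidSignal (N : ℕ) (a : Fin N → Fin N → ℝ → ℝ) : Prop :=
  ∀ i j, Measurable (a i j) ∧ ∀ t : ℝ, 0 ≤ t → a i j t ∈ Set.Icc (0 : ℝ) 1

/-- Admissible kernels: locally Lipschitz and positive on `[0,∞)`. -/
def ValidKernel (φ : ℝ → ℝ) : Prop :=
  LocallyLipschitz φ ∧ ∀ r : ℝ, 0 ≤ r → 0 < φ r

/-- Solutions of the nonlinear multiagent system
`ẋ_i(t) = (1/N) ∑_j a_{ij}(t) φ(|x_i(t) − x_j(t)|)(x_j(t) − x_i(t))` for a.e. `t ≥ 0`,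
as locally Lipschitz curves on `[0,∞)`. -/
def IsMASol {N d : ℕ} (a : Fin N → Fin N → ℝ → ℝ) (φ : ℝ → ℝ)
    (x : Fin N → ℝ → EuclideanSpace ℝ (Fin d)) : Prop :=
  (∀ i, ∀ r : ℝ, 0 < r → ∃ K : NNReal, LipschitzOnWith K (x i) (Set.Icc 0 r)) ∧
  (∀ᵐ t ∂(volume : Measure ℝ), 0 ≤ t → ∀ i, HasDerivAt (x i)
    ((N : ℝ)⁻¹ • ∑ j : Fin N, (a i j t * φ ‖x i t - x j t‖) • (x j t - x i t)) t)

/-- The scrambling coefficient of an `N × N` matrix. -/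
def scrambling {N : ℕ} (A : Fin N → Fin N → ℝ) : ℝ :=
  ⨅ i : Fin N, ⨅ j : Fin N, (N : ℝ)⁻¹ * ∑ k : Fin N, min (A i k) (A j k)

/-- Scrambling-persistent signals: the scrambling coefficient of the averaged matrix
over every window `[t, t+τ]` is at least `μ`. -/
def ScramblingPersistent (N : ℕ) (τ μ : ℝ) (a : Fin N → Fin N → ℝ → ℝ) : Prop :=
  ValidSignal N a ∧
  ∀ t : ℝ, 0 ≤ t → μ ≤ scrambling (fun i j => τ⁻¹ * ∫ s in t..t + τ, a i j s)

/-- A matrix is balanced if its in- and out-degrees coincide. -/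
def IsBalanced {N : ℕ} (A : Fin N → Fin N → ℝ) : Prop :=
  ∀ i, ∑ j : Fin N, A i j = ∑ j : Fin N, A j i

/-- The algebraic connectivity of a (balanced) matrix: the largest `λ` such that
`(1/(2N²)) ∑_{ij} a_{ij} |x_i − x_j|² ≥ λ V(x)` for all configurations `x`. -/
def lambda2 (d : ℕ) {N : ℕ} (A : Fin N → Fin N → ℝ) : ℝ :=
  sSup {lam : ℝ | ∀ x : Fin N → EuclideanSpace ℝ (Fin d),
    lam * mVar x ≤ (2 * (N : ℝ) ^ 2)⁻¹ * ∑ i : Fin N, ∑ j : Fin N, A i j * ‖x i - x j‖ ^ 2}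

/-- Connectivity-persistent balanced signals. -/
def ConnectivityPersistent (N d : ℕ) (τ μ : ℝ) (a : Fin N → Fin N → ℝ → ℝ) : Prop :=
  ValidSignal N a ∧
  (∀ᵐ t ∂(volume : Measure ℝ), 0 ≤ t → IsBalanced (fun i j => a i j t)) ∧
  ∀ t : ℝ, 0 ≤ t → μ ≤ lambda2 d (fun i j => τ⁻¹ * ∫ s in t..t + τ, a i j s)

/-- Solutions of the linear multiagent system
`ẋ_i(t) = (1/N) ∑_j a_{ij}(t) (x_j(t) − x_i(t))` for a.e. `t ≥ 0`. -/
def IsLinSol {N d : ℕ} (a : Fin N → Fin N → ℝ → ℝ)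
    (x : Fin N → ℝ → EuclideanSpace ℝ (Fin d)) : Prop :=
  (∀ i, ∀ r : ℝ, 0 < r → ∃ K : NNReal, LipschitzOnWith K (x i) (Set.Icc 0 r)) ∧
  (∀ᵐ t ∂(volume : Measure ℝ), 0 ≤ t → ∀ i, HasDerivAt (x i)
    ((N : ℝ)⁻¹ • ∑ j : Fin N, a i j t • (x j t - x i t)) t)


open Set Filter
open scoped NNReal RealInnerProductSpace Topology

theorem AbsolutelyContinuousOnInterval.monotoneOn_of_hasDerivAt_nonneg {f : ℝ → ℝ} {a b : ℝ}
    (hf : AbsolutelyContinuousOnInterval f a b)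
    (hf' : ∀ᵐ σ, σ ∈ Ioo a b → ∀ f', HasDerivAt f f' σ → 0 ≤ f') :
    MonotoneOn f (Icc a b) := by
  intro p hp q hq hpq
  have hac : AbsolutelyContinuousOnInterval f p q :=
    hf.mono (uIcc_subset_uIcc (Icc_subset_uIcc hp) (Icc_subset_uIcc hq))
  have hderiv : 0 ≤ᵐ[volume.restrict (Icc p q)] deriv f := by
    rw [← Measure.restrict_congr_set Ioo_ae_eq_Icc, EventuallyLE, ae_restrict_iff' measurableSet_Ioo]
    filter_upwards [hf'] with σ hσ hσpq
    by_cases hd : DifferentiableAt ℝ f σ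
    · exact hσ ⟨hp.1.trans_lt hσpq.1, hσpq.2.trans_le hq.2⟩ _ hd.hasDerivAt
    · simp [deriv_zero_of_not_differentiableAt hd]
  have := intervalIntegral.integral_nonneg_of_ae_restrict hpq hderiv
  rw [hac.integral_deriv_eq_sub] at this
  linarith

theorem HasDerivAt.eq_of_eventually_le_of_eq {f g : ℝ → ℝ} {f' g' x : ℝ}
    (hf : HasDerivAt f f' x) (hg : HasDerivAt g g' x) (hle : ∀ᶠ y in 𝓝 x, f y ≤ g y)
    (hx : f x = g x) : f' = g' := by
  have hmax : IsLocalMax (fun y => f y - g y) x := by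
    filter_upwards [hle] with y hy
    simpa [hx] using hy
  exact sub_eq_zero.1 (hmax.hasDerivAt_eq_zero (hf.sub hg))

theorem LipschitzOnWith.finset_inf' {ι α : Type*} [PseudoMetricSpace α] {s : Finset ι}
    (hs : s.Nonempty) {u : ι → α → ℝ} {K : ℝ≥0} {t : Set α}
    (hu : ∀ k ∈ s, LipschitzOnWith K (u k) t) :
    LipschitzOnWith K (fun y => s.inf' hs (u · y)) t := by
  refine LipschitzOnWith.of_le_add_mul K fun y hy z hz => ?_
  obtain ⟨k, hk, hkz⟩ := s.exists_mem_eq_inf' hs (u · z)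
  calc s.inf' hs (u · y) ≤ u k y := s.inf'_le _ hk
    _ ≤ u k z + K * dist y z := by
        have := (hu k hk).dist_le_mul y hy z hz
        rw [Real.dist_eq] at this
        linarith [le_abs_self (u k y - u k z)]
    _ = s.inf' hs (u · z) + K * dist y z := by rw [hkz]

theorem monotoneOn_inf'_of_hasDerivAt_nonneg {ι : Type*} [Fintype ι] [Nonempty ι]
    {u : ι → ℝ → ℝ} {a b : ℝ} (hu : ∀ k, ∃ K, LipschitzOnWith K (u k) (Icc a b))
    (hu' : ∀ᵐ σ, σ ∈ Ioo a b → ∃ u' : ι → ℝ,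
      (∀ k, HasDerivAt (u k) (u' k) σ) ∧ ∀ k, (∀ l, u k σ ≤ u l σ) → 0 ≤ u' k) :
    MonotoneOn (fun σ => univ.inf' univ_nonempty (u · σ)) (Icc a b) := by
  rcases lt_or_ge b a with hba | hab
  · exact fun p hp => absurd (hp.1.trans hp.2) (not_le.2 hba)
  choose K hK using hu
  have hlip : LipschitzOnWith (univ.sup K) (fun σ => univ.inf' univ_nonempty (u · σ)) (Icc a b) :=
    LipschitzOnWith.finset_inf' univ_nonempty fun k _ => (hK k).weaken (le_sup (mem_univ k))
  rw [← uIcc_of_le hab] at hlip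
  refine hlip.absolutelyContinuousOnInterval.monotoneOn_of_hasDerivAt_nonneg ?_
  filter_upwards [hu'] with σ hσ hσab m' hm'
  obtain ⟨u', hder, hnonneg⟩ := hσ hσab
  obtain ⟨k, -, hk⟩ := univ.exists_mem_eq_inf' univ_nonempty (u · σ)
  rw [hm'.eq_of_eventually_le_of_eq (hder k)
    (Eventually.of_forall fun y => univ.inf'_le _ (mem_univ k)) hk]
  exact hnonneg k fun l => hk ▸ univ.inf'_le _ (mem_univ l)

section Consensus

variable {ι E : Type*} [Fintype ι]

def IsConsensusSol [NormedAddCommGroup E] [NormedSpace ℝ E]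
    (c : ι → ι → ℝ → ℝ) (x : ι → ℝ → E) : Prop :=
  (∀ k, ∀ r : ℝ, 0 < r → ∃ K : ℝ≥0, LipschitzOnWith K (x k) (Icc 0 r)) ∧
  ∀ᵐ σ, 0 ≤ σ → ∀ k, HasDerivAt (x k) (∑ m, c k m σ • (x m σ - x k σ)) σ

namespace IsConsensusSol

variable {c : ι → ι → ℝ → ℝ}

theorem exists_lipschitzOnWith [NormedAddCommGroup E] [NormedSpace ℝ E] {x : ι → ℝ → E}
    (hx : IsConsensusSol c x) (k : ι) {a : ℝ} (ha : 0 ≤ a) (b : ℝ) :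
    ∃ K : ℝ≥0, LipschitzOnWith K (x k) (Icc a b) := by
  obtain ⟨K, hK⟩ := hx.1 k (max b 0 + 1) (by positivity)
  exact ⟨K, hK.mono (Icc_subset_Icc ha (by linarith [le_max_left b 0]))⟩

theorem inner [NormedAddCommGroup E] [InnerProductSpace ℝ E] {x : ι → ℝ → E}
    (hx : IsConsensusSol c x) (v : E) : IsConsensusSol c (fun k σ => ⟪x k σ, v⟫) := by
  refine ⟨fun k r hr => ?_, ?_⟩
  · obtain ⟨K, hK⟩ := hx.1 k r hr
    have hcomp : (fun σ => ⟪x k σ, v⟫) = innerSL ℝ v ∘ x k := by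
      ext σ
      simp [real_inner_comm]
    exact ⟨_, hcomp ▸ (innerSL ℝ v).lipschitz.comp_lipschitzOnWith hK⟩
  · filter_upwards [hx.2] with σ hσ hσ0 k
    have h := (hσ hσ0 k).inner ℝ (hasDerivAt_const σ v)
    simp only [inner_zero_right, zero_add, sum_inner, real_inner_smul_left, inner_sub_left] at h
    simpa only [smul_eq_mul] using h

variable {u : ι → ℝ → ℝ}

theorem monotoneOn_inf' [Nonempty ι] (hu : IsConsensusSol c u)
    (hc : ∀ k m σ, 0 ≤ σ → 0 ≤ c k m σ) :
    MonotoneOn (fun σ => univ.inf' univ_nonempty (u · σ)) (Ici 0) := by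
  intro p hp q hq hpq
  refine monotoneOn_inf'_of_hasDerivAt_nonneg (fun k => hu.exists_lipschitzOnWith k hp q) ?_
    ⟨le_rfl, hpq⟩ ⟨hpq, le_rfl⟩ hpq
  filter_upwards [hu.2] with σ hσ hσpq
  have hσ0 : 0 ≤ σ := le_trans hp hσpq.1.le
  refine ⟨_, hσ hσ0, fun k hk => sum_nonneg fun m _ => ?_⟩
  exact smul_nonneg (hc k m σ hσ0) (sub_nonneg.2 (hk m))

theorem exists_le (hu : IsConsensusSol c u) (hc : ∀ k m σ, 0 ≤ σ → 0 ≤ c k m σ)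
    {t s : ℝ} (ht : 0 ≤ t) (hts : t ≤ s) (l : ι) : ∃ m, u m t ≤ u l s := by
  have : Nonempty ι := ⟨l⟩
  obtain ⟨m, -, hm⟩ := univ.exists_mem_eq_inf' univ_nonempty (u · t)
  refine ⟨m, ?_⟩
  calc u m t = univ.inf' univ_nonempty (u · t) := hm.symm
    _ ≤ univ.inf' univ_nonempty (u · s) :=
      hu.monotoneOn_inf' hc ht (ht.trans hts : (0 : ℝ) ≤ s) hts
    _ ≤ u l s := univ.inf'_le _ (mem_univ l)

theorem sub_mul_exp_le (hu : IsConsensusSol c u)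
    (hc : ∀ k m σ, 0 ≤ σ → 0 ≤ c k m σ) {C t s p : ℝ} (hC : ∀ k σ, t ≤ σ → ∑ m, c k m σ ≤ C)
    (ht : 0 ≤ t) (hts : t ≤ s) (hp : ∀ m, p ≤ u m t) (k : ι) :
    (u k t - p) * Real.exp (-C * (s - t)) ≤ u k s - p := by
  have hsep : ∀ σ, t ≤ σ → ∀ m, p ≤ u m σ := fun σ hσ m => by
    obtain ⟨m', hm'⟩ := hu.exists_le hc ht hσ m
    exact (hp m').trans hm'
  set w : ℝ → ℝ := fun σ => (u k σ - p) * Real.exp (C * (σ - t))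
  have hw_ac : AbsolutelyContinuousOnInterval w t s := by
    obtain ⟨K, hK⟩ := hu.exists_lipschitzOnWith k ht s
    rw [← uIcc_of_le hts] at hK
    refine AbsolutelyContinuousOnInterval.fun_mul
      (hK.absolutelyContinuousOnInterval.sub contDiffOn_const.absolutelyContinuousOnInterval)
      (ContDiff.contDiffOn ?_).absolutelyContinuousOnInterval
    fun_prop
  have hw_mono : MonotoneOn w (Icc t s) := by
    refine hw_ac.monotoneOn_of_hasDerivAt_nonneg ?_
    filter_upwards [hu.2] with σ hσ hσts w' hw'
    have hσ0 : 0 ≤ σ := ht.trans hσts.1.le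
    have hexp : HasDerivAt (fun τ => Real.exp (C * (τ - t))) (Real.exp (C * (σ - t)) * C) σ := by
      simpa using (((hasDerivAt_id σ).sub_const t).const_mul C).exp
    rw [hw'.unique (((hσ hσ0 k).sub_const p).mul hexp)]
    have hdrift : -(C * (u k σ - p)) ≤ ∑ m, c k m σ • (u m σ - u k σ) := by
      calc -(C * (u k σ - p)) ≤ -((∑ m, c k m σ) * (u k σ - p)) :=
            neg_le_neg (mul_le_mul_of_nonneg_right (hC k σ hσts.1.le)
              (sub_nonneg.2 (hsep σ hσts.1.le k)))
        _ = ∑ m, c k m σ * (p - u k σ) := by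
              rw [← sum_mul, ← neg_sub (u k σ) p, mul_neg]
        _ ≤ ∑ m, c k m σ • (u m σ - u k σ) := sum_le_sum fun m _ =>
            mul_le_mul_of_nonneg_left (by linarith [hsep σ hσts.1.le m]) (hc k m σ hσ0)
    have := Real.exp_pos (C * (σ - t))
    nlinarith
  have hts' := hw_mono ⟨le_rfl, hts⟩ ⟨hts, le_rfl⟩ hts
  simp only [w, sub_self, mul_zero, Real.exp_zero, mul_one] at hts'
  calc (u k t - p) * Real.exp (-C * (s - t))
      ≤ (u k s - p) * Real.exp (C * (s - t)) * Real.exp (-C * (s - t)) :=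
        mul_le_mul_of_nonneg_right hts' (Real.exp_pos _).le
    _ = u k s - p := by rw [mul_assoc, ← Real.exp_add]; ring_nf; simp

theorem norm_sub_le [NormedAddCommGroup E] [InnerProductSpace ℝ E] {x : ι → ℝ → E}
    (hx : IsConsensusSol c x) (hc : ∀ k m σ, 0 ≤ σ → 0 ≤ c k m σ) {R : ℝ}
    (hR : ∀ m m', ‖x m 0 - x m' 0‖ ≤ R) {s : ℝ} (hs : 0 ≤ s) (k l : ι) :
    ‖x k s - x l s‖ ≤ R := by
  set w := x k s - x l s
  obtain ⟨m, hm⟩ := (hx.inner w).exists_le hc le_rfl hs l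
  obtain ⟨m', hm'⟩ := (hx.inner (-w)).exists_le hc le_rfl hs k
  simp only [inner_neg_right] at hm hm'
  have hsq : ‖w‖ ^ 2 ≤ R * ‖w‖ :=
    calc ‖w‖ ^ 2 = ⟪x k s, w⟫ - ⟪x l s, w⟫ := by rw [← inner_sub_left, real_inner_self_eq_norm_sq]
      _ ≤ ⟪x m' 0, w⟫ - ⟪x m 0, w⟫ := by linarith
      _ = ⟪x m' 0 - x m 0, w⟫ := (inner_sub_left _ _ _).symm
      _ ≤ ‖x m' 0 - x m 0‖ * ‖w‖ := real_inner_le_norm _ _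
      _ ≤ R * ‖w‖ := mul_le_mul_of_nonneg_right (hR _ _) (norm_nonneg _)
  nlinarith [norm_nonneg w, (norm_nonneg _).trans (hR k k)]

end IsConsensusSol

end Consensus

theorem inner_sub_nonneg_of_norm_sub_le {F : Type*} [NormedAddCommGroup F] [InnerProductSpace ℝ F]
    {x y z : F} (h : ‖z - x‖ ≤ ‖x - y‖) : 0 ≤ ⟪z - y, x - y⟫ := by
  have hsq := norm_sub_sq_real (z - y) (x - y)
  rw [sub_sub_sub_cancel_right] at hsq
  nlinarith [norm_nonneg (z - x), sq_nonneg ‖z - y‖]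

theorem norm_sub_le_mDiam {N d : ℕ} (y : Fin N → EuclideanSpace ℝ (Fin d)) (k l : Fin N) :
    ‖y k - y l‖ ≤ mDiam y :=
  (le_ciSup (f := fun l => ‖y k - y l‖) (Set.finite_range _).bddAbove l).trans
    (le_ciSup (f := fun k => ⨆ l, ‖y k - y l‖) (Set.finite_range _).bddAbove k)

section Multiagent

variable {N d : ℕ} {a : Fin N → Fin N → ℝ → ℝ} {φ : ℝ → ℝ}
  {x : Fin N → ℝ → EuclideanSpace ℝ (Fin d)}

def masWeight (a : Fin N → Fin N → ℝ → ℝ) (φ : ℝ → ℝ) (x : Fin N → ℝ → EuclideanSpace ℝ (Fin d))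
    (k m : Fin N) (σ : ℝ) : ℝ :=
  (N : ℝ)⁻¹ * (a k m σ * φ ‖x k σ - x m σ‖)

theorem masWeight_nonneg (ha : ValidSignal N a) (hφ : ValidKernel φ) (k m : Fin N) {σ : ℝ}
    (hσ : 0 ≤ σ) : 0 ≤ masWeight a φ x k m σ :=
  mul_nonneg (by positivity) (mul_nonneg ((ha k m).2 σ hσ).1 (hφ.2 _ (norm_nonneg _)).le)

theorem IsMASol.isConsensusSol (hx : IsMASol a φ x) : IsConsensusSol (masWeight a φ x) x := by
  refine ⟨hx.1, ?_⟩
  filter_upwards [hx.2] with σ hσ hσ0 k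
  simpa only [masWeight, smul_sum, smul_smul] using hσ hσ0 k

theorem IsMASol.sum_masWeight_le (ha : ValidSignal N a) (hφ : ValidKernel φ) (hx : IsMASol a φ x)
    {Cφ : ℝ} (hbound : ∀ r ∈ Set.Icc 0 (mDiam (fun i => x i 0)), φ r ≤ Cφ) (k : Fin N) {σ : ℝ}
    (hσ : 0 ≤ σ) : ∑ m, masWeight a φ x k m σ ≤ Cφ := by
  have hterm : ∀ m, masWeight a φ x k m σ ≤ (N : ℝ)⁻¹ * Cφ := fun m => by
    have hdist : ‖x k σ - x m σ‖ ≤ mDiam (fun i => x i 0) :=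
      hx.isConsensusSol.norm_sub_le (fun k m σ hσ => masWeight_nonneg ha hφ k m hσ)
        (norm_sub_le_mDiam _) hσ k m
    have hφle := hbound _ ⟨norm_nonneg _, hdist⟩
    have hφpos := hφ.2 ‖x k σ - x m σ‖ (norm_nonneg _)
    have ha01 := (ha k m).2 σ hσ
    refine mul_le_mul_of_nonneg_left ?_ (by positivity)
    nlinarith [ha01.1, ha01.2]
  calc ∑ m, masWeight a φ x k m σ ≤ ∑ _m : Fin N, (N : ℝ)⁻¹ * Cφ := sum_le_sum fun m _ => hterm m
    _ = Cφ := by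
      rw [sum_const, card_univ, Fintype.card_fin, nsmul_eq_mul,
        mul_inv_cancel_left₀ (Nat.cast_ne_zero.2 k.pos.ne')]

theorem IsMASol.inner_sub_mul_exp_le (ha : ValidSignal N a) (hφ : ValidKernel φ)
    (hx : IsMASol a φ x) {i j : Fin N} {t : ℝ} (ht : 0 ≤ t)
    (hij : ‖x i t - x j t‖ = mDiam (fun k => x k t)) {Cφ : ℝ}
    (hbound : ∀ r ∈ Set.Icc 0 (mDiam (fun i => x i 0)), φ r ≤ Cφ) (k : Fin N) {s : ℝ}
    (hts : t ≤ s) :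
    ⟪x k t - x j t, x i t - x j t⟫ * Real.exp (-Cφ * (s - t)) ≤ ⟪x k s - x j t, x i t - x j t⟫ := by
  have hside : ∀ m, ⟪x j t, x i t - x j t⟫ ≤ ⟪x m t, x i t - x j t⟫ := fun m => by
    have := inner_sub_nonneg_of_norm_sub_le (hij ▸ norm_sub_le_mDiam (fun k => x k t) m i)
    rwa [inner_sub_left, sub_nonneg] at this
  have := (hx.isConsensusSol.inner (x i t - x j t)).sub_mul_exp_le
    (fun k m σ hσ => masWeight_nonneg ha hφ k m hσ)
    (fun k σ hσ => hx.sum_masWeight_le ha hφ hbound k (ht.trans hσ)) ht hts hside k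
  simpa only [inner_sub_left] using this

end Multiagent

theorem scalar_product_gronwall_bounds_general {N d : ℕ}
    (a : Fin N → Fin N → ℝ → ℝ) (φ : ℝ → ℝ)
    (ha : ValidSignal N a) (hφ : ValidKernel φ)
    (x : Fin N → ℝ → EuclideanSpace ℝ (Fin d)) (hx : IsMASol a φ x)
    (i j : Fin N) (t : ℝ) (ht : 0 ≤ t)
    (hij : ‖x i t - x j t‖ = mDiam (fun k => x k t))
    (Cφ : ℝ)
    (hbound : ∀ r ∈ Set.Icc 0 (mDiam (fun i => x i 0)), φ r ≤ Cφ) :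
    ∀ k : Fin N, ∀ s : ℝ, t ≤ s →
      (inner ℝ (x i t - x k t) (x i t - x j t) : ℝ) * Real.exp (-Cφ * (s - t)) ≤
        (inner ℝ (x i t - x k s) (x i t - x j t) : ℝ) ∧
      (inner ℝ (x k t - x j t) (x i t - x j t) : ℝ) * Real.exp (-Cφ * (s - t)) ≤
        (inner ℝ (x k s - x j t) (x i t - x j t) : ℝ) := by
  intro k s hts
  refine ⟨?_, hx.inner_sub_mul_exp_le ha hφ ht hij hbound k hts⟩
  have hji : ‖x j t - x i t‖ = mDiam (fun k => x k t) := by rw [norm_sub_rev, hij]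
  have := hx.inner_sub_mul_exp_le ha hφ ht hji hbound k hts
  rwa [← inner_neg_neg, neg_sub, neg_sub, ← inner_neg_neg (x k s - x i t), neg_sub, neg_sub] at this

/-- Grönwall-type scalar product estimates for a pair `(i,j)` realising the
diameter at time `t`: for every agent `k` and every `s ≥ t`, the scalar products against
`x_i(t) − x_j(t)` decay at most exponentially with rate `C_φ`. -/
theorem scalar_product_gronwall_bounds {N d : ℕ} (hN : 1 ≤ N)
    (a : Fin N → Fin N → ℝ → ℝ) (φ : ℝ → ℝ)
    (ha : ValidSignal N a) (hφ : ValidKernel φ)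
    (x : Fin N → ℝ → EuclideanSpace ℝ (Fin d)) (hx : IsMASol a φ x)
    (i j : Fin N) (t : ℝ) (ht : 0 ≤ t)
    (hij : ‖x i t - x j t‖ = mDiam (fun k => x k t))
    (Cφ : ℝ) (hCφ : 0 < Cφ)
    (hbound : ∀ r ∈ Set.Icc 0 (mDiam (fun i => x i 0)), φ r ≤ Cφ) :
    ∀ k : Fin N, ∀ s : ℝ, t ≤ s →
      (inner ℝ (x i t - x k t) (x i t - x j t) : ℝ) * Real.exp (-Cφ * (s - t)) ≤
        (inner ℝ (x i t - x k s) (x i t - x j t) : ℝ) ∧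
      (inner ℝ (x k t - x j t) (x i t - x j t) : ℝ) * Real.exp (-Cφ * (s - t)) ≤
        (inner ℝ (x k s - x j t) (x i t - x j t) : ℝ) :=
  scalar_product_gronwall_bounds_general a φ ha hφ x hx i j t ht hij Cφ hbound
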